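/- arXiv:1906.10274 — 4 statements merged into one kernel-verified Lean document; each statement's English description precedes it below -/
import Mathlib

section
/- Let n and N be positive integers and let S : [-π, π] → Matrix n n ℂ be an integrable matrix-valued function such that S(ω) is Hermitian positive semidefinite for almost every ω ∈ [-π, π]. Define R : ℤ → Matrix n n ℂ by R(k) = ∫_{-π}^{π} e^{ikω} S(ω) dω, and let R̄(N) be the Nn × Nn block Toeplitz matrix whose (l,m) block (1 ≤ l, m ≤ N) is R(m − l). Then R̄(N) is Hermitian positive semidefinite. -/
open MeasureTheory Matrix Real
open scoped ComplexOrder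

/-! With `B(ω)` the `n × Nn` block row `[e^{i·0·ω} I | e^{i·1·ω} I | ⋯ | e^{i(N-1)ω} I]`,
the block Toeplitz matrix is `∫ B(ω)ᴴ S(ω) B(ω) dω`. Each integrand is positive semidefinite,
and positive semidefiniteness survives integration because `xᴴ M x` is linear in `M`. -/

theorem Matrix.star_dotProduct_mulVec_eq_sum {ι R : Type*} [Fintype ι] [CommSemiring R] [StarRing R]
    (A : Matrix ι ι R) (x : ι → R) :
    star x ⬝ᵥ (A *ᵥ x) = ∑ i, ∑ j, star (x i) * x j * A i j := by
  simp only [dotProduct, mulVec, Finset.mul_sum, Pi.star_apply]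
  exact Finset.sum_congr rfl fun i _ => Finset.sum_congr rfl fun j _ => by ring

theorem Matrix.PosSemidef.of_forall_apply_eq_integral {α ι : Type*} [MeasurableSpace α]
    {μ : Measure α} [Fintype ι] {M : Matrix ι ι ℂ} {T : α → Matrix ι ι ℂ}
    (hT : ∀ i j, Integrable (fun a => T a i j) μ) (hTpsd : ∀ᵐ a ∂μ, (T a).PosSemidef)
    (hM : ∀ i j, M i j = ∫ a, T a i j ∂μ) : M.PosSemidef := by
  refine .of_dotProduct_mulVec_nonneg ?_ fun x => ?_
  · ext i j
    rw [conjTranspose_apply, hM, hM, RCLike.star_def, ← integral_conj]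
    refine integral_congr_ae ?_
    filter_upwards [hTpsd] with a ha
    exact ha.1.apply i j
  · have hquad : star x ⬝ᵥ (M *ᵥ x) = ∫ a, star x ⬝ᵥ (T a *ᵥ x) ∂μ := by
      simp only [star_dotProduct_mulVec_eq_sum, hM]
      rw [integral_finsetSum _ fun i _ => integrable_finsetSum _ fun j _ => (hT i j).const_mul _]
      refine Finset.sum_congr rfl fun i _ => ?_
      rw [integral_finsetSum _ fun j _ => (hT i j).const_mul _]
      simp only [integral_const_mul]
    rw [hquad]
    refine integral_nonneg_of_ae ?_
    filter_upwards [hTpsd] with a ha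
    exact ha.dotProduct_mulVec_nonneg x

theorem star_cexp_mul_cexp (k l : ℤ) (ω : ℝ) :
    star (Complex.exp (Complex.I * k * ω)) * Complex.exp (Complex.I * l * ω) =
      Complex.exp (Complex.I * (l - k : ℤ) * ω) := by
  rw [RCLike.star_def, ← Complex.exp_conj, ← Complex.exp_add]
  congr 1
  simp only [map_mul, Complex.conj_I, map_intCast, Complex.conj_ofReal]
  push_cast
  ring

theorem MeasureTheory.IntegrableOn.cexp_mul {f : ℝ → ℂ} {s : Set ℝ} (hf : IntegrableOn f s)
    (k : ℤ) : IntegrableOn (fun ω : ℝ => Complex.exp (Complex.I * k * ω) * f ω) s :=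
  hf.bdd_mul (c := 1) (by fun_prop) (.of_forall fun ω => le_of_eq (by simp [Complex.norm_exp]))

noncomputable def fourierEmbedding (N : ℕ) (ι : Type*) [DecidableEq ι] (ω : ℝ) :
    Matrix ι (Fin N × ι) ℂ :=
  Matrix.of fun i p => if p.2 = i then Complex.exp (Complex.I * (p.1 : ℤ) * ω) else 0

theorem conjTranspose_fourierEmbedding_mul_mul_apply {N : ℕ} {ι : Type*} [Fintype ι]
    [DecidableEq ι] (A : Matrix ι ι ℂ) (ω : ℝ) (l m : Fin N) (i j : ι) :
    ((fourierEmbedding N ι ω)ᴴ * A * fourierEmbedding N ι ω) (l, i) (m, j) =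
      Complex.exp (Complex.I * ((m : ℤ) - (l : ℤ) : ℤ) * ω) * A i j := by
  simp only [Matrix.mul_apply, conjTranspose_apply, fourierEmbedding, of_apply,
    apply_ite (star : ℂ → ℂ), star_zero, ite_mul, zero_mul, mul_ite, mul_zero, Finset.sum_ite_eq,
    Finset.mem_univ, if_true]
  rw [← star_cexp_mul_cexp]
  ring

theorem block_toeplitz_of_spectral_measure_posSemidef_general
    (n N : ℕ)
    (S : ℝ → Matrix (Fin n) (Fin n) ℂ)
    (hS : ∀ i j, IntegrableOn (fun ω => S ω i j) (Set.Icc (-π) π))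
    (hSpsd : ∀ᵐ ω ∂(volume.restrict (Set.Icc (-π) π)), (S ω).PosSemidef)
    (R : ℤ → Matrix (Fin n) (Fin n) ℂ)
    (hR : ∀ (k : ℤ) (i j : Fin n),
      R k i j = ∫ ω in Set.Icc (-π) π, Complex.exp (Complex.I * k * ω) * S ω i j)
    (Rbar : Matrix (Fin N × Fin n) (Fin N × Fin n) ℂ)
    (hRbar : ∀ (l m : Fin N) (i j : Fin n),
      Rbar (l, i) (m, j) = R ((m : ℤ) - (l : ℤ)) i j) :
    Rbar.PosSemidef := by
  refine .of_forall_apply_eq_integral (μ := volume.restrict (Set.Icc (-π) π))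
    (T := fun ω => (fourierEmbedding N (Fin n) ω)ᴴ * S ω * fourierEmbedding N (Fin n) ω)
    ?_ (hSpsd.mono fun ω hω => hω.conjTranspose_mul_mul_same _) ?_
  · rintro ⟨l, i⟩ ⟨m, j⟩
    simp only [conjTranspose_fourierEmbedding_mul_mul_apply]
    exact (hS i j).cexp_mul _
  · rintro ⟨l, i⟩ ⟨m, j⟩
    simp only [hRbar, hR, conjTranspose_fourierEmbedding_mul_mul_apply]

/-- If `S : [-π, π] → Matrix n n ℂ` is integrable and a.e. Hermitian
positive semidefinite, and `R(k) = ∫_{-π}^{π} e^{ikω} S(ω) dω`, then the `Nn × Nn`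
block Toeplitz matrix `R̄(N)` with `(l, m)` block `R(m − l)` is Hermitian positive
semidefinite. -/
theorem block_toeplitz_of_spectral_measure_posSemidef
    (n N : ℕ) (hn : 0 < n) (hN : 0 < N)
    (S : ℝ → Matrix (Fin n) (Fin n) ℂ)
    (hS : ∀ i j, IntegrableOn (fun ω => S ω i j) (Set.Icc (-π) π))
    (hSpsd : ∀ᵐ ω ∂(volume.restrict (Set.Icc (-π) π)), (S ω).PosSemidef)
    (R : ℤ → Matrix (Fin n) (Fin n) ℂ)
    (hR : ∀ (k : ℤ) (i j : Fin n),
      R k i j = ∫ ω in Set.Icc (-π) π, Complex.exp (Complex.I * k * ω) * S ω i j)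
    (Rbar : Matrix (Fin N × Fin n) (Fin N × Fin n) ℂ)
    (hRbar : ∀ (l m : Fin N) (i j : Fin n),
      Rbar (l, i) (m, j) = R ((m : ℤ) - (l : ℤ)) i j) :
    Rbar.PosSemidef :=
  block_toeplitz_of_spectral_measure_posSemidef_general n N S hS hSpsd R hR Rbar hRbar
end

section
/- Let n and N be positive integers and let S : [-π, π] → Matrix n n ℂ be an integrable matrix-valued function such that S(ω) is Hermitian positive semidefinite for almost every ω ∈ [-π, π]. Define R(k) = ∫_{-π}^{π} e^{ikω} S(ω) dω and let R̄(N) be the Nn × Nn block Toeplitz matrix whose (l,m) block is R(m − l). Then R̄(N) is positive definite if and only if for every nonzero q = (q_1, …, q_N) ∈ (ℂ^n)^N, the set { ω ∈ [-π, π] : S(ω) Q(ω) ≠ 0 } has positive Lebesgue measure, where Q(ω) = Σ_{k=1}^N e^{ikω} q_k. Equivalently, R̄(N) is positive definite if and only if no nonzero filter Q lies in the null space of S(ω) for almost every ω. -/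
open MeasureTheory Matrix Real
open scoped ComplexOrder

/-!
Let `B(ω)` be the block row `[e^{iω} I ⋯ e^{iNω} I]`, so that `B(ω) x = Q(ω)` when `x` stacks the
coefficients of `Q`. The `(l, m)` block of `B(ω)ᴴ S(ω) B(ω)` is `e^{i(m-l)ω} S(ω)`, so
`R̄(N) = ∫ B(ω)ᴴ S(ω) B(ω) dω` and `x* R̄(N) x = ∫ Q(ω)* S(ω) Q(ω) dω`, the integral of an almost
everywhere nonnegative function. A complex matrix with nonnegative quadratic form is Hermitian,
so `R̄(N)` is positive semidefinite, and its quadratic form vanishes at `x` exactly when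
`Q(ω)* S(ω) Q(ω) = 0`, i.e. `S(ω) Q(ω) = 0`, for almost every `ω`.
-/
section Integral

variable {α 𝕜 : Type*} [MeasurableSpace α] {μ : Measure α} [RCLike 𝕜]

theorem RCLike.integral_pos_iff_support_of_nonneg_ae {f : α → 𝕜} (hf : 0 ≤ᵐ[μ] f)
    (hfi : Integrable f μ) : 0 < ∫ x, f x ∂μ ↔ 0 < μ (Function.support f) := by
  have hre : ∀ᵐ x ∂μ, ((RCLike.re (f x) : ℝ) : 𝕜) = f x := hf.mono fun x hx =>
    RCLike.conj_eq_iff_re.mp (RCLike.conj_eq_iff_im.mpr (RCLike.nonneg_iff.mp hx).2)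
  have hsupp : Function.support (fun x => RCLike.re (f x)) =ᵐ[μ] Function.support f := by
    filter_upwards [hre] with x hx
    change (re (f x) ≠ 0) = (f x ≠ 0)
    rw [← hx, RCLike.ofReal_re, RCLike.ofReal_ne_zero]
  have hreal := MeasureTheory.integral_pos_iff_support_of_nonneg_ae
    (hf.mono fun x hx => (RCLike.nonneg_iff.mp hx).1) hfi.re
  rw [← measure_congr hsupp, ← hreal, ← RCLike.ofReal_pos (K := 𝕜), ← integral_ofReal,
    integral_congr_ae hre]

namespace Matrix

variable {m n : Type*} [Fintype m] [Fintype n]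

theorem integrable_dotProduct_mulVec {A : α → Matrix m n 𝕜}
    (hA : ∀ i j, Integrable (fun ω => A ω i j) μ) (x : m → 𝕜) (y : n → 𝕜) :
    Integrable (fun ω => x ⬝ᵥ A ω *ᵥ y) μ := by
  simp only [dotProduct, mulVec, Finset.mul_sum]
  exact integrable_finsetSum _ fun i _ => integrable_finsetSum _ fun j _ =>
    ((hA i j).mul_const _).const_mul _

theorem dotProduct_mulVec_integral {A : α → Matrix m n 𝕜}
    (hA : ∀ i j, Integrable (fun ω => A ω i j) μ) (x : m → 𝕜) (y : n → 𝕜) :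
    x ⬝ᵥ (of fun i j => ∫ ω, A ω i j ∂μ) *ᵥ y = ∫ ω, x ⬝ᵥ A ω *ᵥ y ∂μ := by
  simp only [dotProduct, mulVec, of_apply, Finset.mul_sum]
  rw [integral_finsetSum _ fun i _ => integrable_finsetSum _ fun j _ =>
    ((hA i j).mul_const _).const_mul _]
  refine Finset.sum_congr rfl fun i _ => ?_
  rw [integral_finsetSum _ fun j _ => ((hA i j).mul_const _).const_mul _]
  simp only [integral_const_mul, integral_mul_const]

theorem integral_star_dotProduct_mulVec_pos_iff {S : α → Matrix n n 𝕜}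
    (hS : ∀ᵐ ω ∂μ, (S ω).PosSemidef) {v : α → n → 𝕜}
    (hint : Integrable (fun ω => star (v ω) ⬝ᵥ S ω *ᵥ v ω) μ) :
    0 < ∫ ω, star (v ω) ⬝ᵥ S ω *ᵥ v ω ∂μ ↔ 0 < μ {ω | S ω *ᵥ v ω ≠ 0} := by
  rw [RCLike.integral_pos_iff_support_of_nonneg_ae
    (hS.mono fun ω h => h.dotProduct_mulVec_nonneg _) hint]
  refine Iff.of_eq (congrArg _ (measure_congr ?_))
  filter_upwards [hS] with ω h
  change (star (v ω) ⬝ᵥ S ω *ᵥ v ω ≠ 0) = (S ω *ᵥ v ω ≠ 0)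
  rw [ne_eq, h.dotProduct_mulVec_zero_iff]

end Matrix

end Integral

namespace Matrix

theorem posSemidef_of_forall_dotProduct_mulVec_nonneg {n : Type*} [Fintype n]
    {A : Matrix n n ℂ} (hA : ∀ x, 0 ≤ star x ⬝ᵥ A *ᵥ x) : A.PosSemidef := by
  classical
  refine PosSemidef.of_dotProduct_mulVec_nonneg ?_ hA
  refine isSymmetric_toEuclideanLin_iff.mp
    ((LinearMap.isSymmetric_iff_inner_map_self_real _).mpr fun v => ?_)
  have hreal := Complex.conj_eq_iff_im.mpr (Complex.nonneg_iff.mp (hA (WithLp.ofLp v))).2.symm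
  have hinner : inner ℂ (A.toEuclideanLin v) v =
      star (star (WithLp.ofLp v) ⬝ᵥ A *ᵥ WithLp.ofLp v) := by
    rw [EuclideanSpace.inner_eq_star_dotProduct, star_dotProduct, star_star, dotProduct_comm]
    rfl
  rw [hinner, ← Complex.star_def, star_star, Complex.star_def, hreal]

theorem star_dotProduct_conjTranspose_mul_mul_mulVec {m n R : Type*} [Fintype m] [Fintype n]
    [CommSemiring R] [StarRing R] (B : Matrix m n R) (S : Matrix m m R) (x : n → R) :
    star x ⬝ᵥ (Bᴴ * S * B) *ᵥ x = star (B *ᵥ x) ⬝ᵥ S *ᵥ (B *ᵥ x) := by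
  simp only [star_mulVec, dotProduct_mulVec, vecMul_vecMul]

section filterMatrix

variable {ι R : Type*} (κ : Type*) [Fintype κ] [DecidableEq κ] [CommSemiring R]

/-- The block row `[c₁ I ⋯ c_N I]`. -/
def filterMatrix (c : ι → R) : Matrix κ (ι × κ) R :=
  of fun i p => if p.2 = i then c p.1 else 0

theorem filterMatrix_mulVec_uncurry [Fintype ι] (c : ι → R) (q : ι → κ → R) :
    filterMatrix κ c *ᵥ Function.uncurry q = ∑ k, c k • q k := by
  ext i
  simp [filterMatrix, mulVec, dotProduct, Fintype.sum_prod_type]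

theorem conjTranspose_mul_mul_filterMatrix [StarRing R] (c : ι → R) (S : Matrix κ κ R) :
    (filterMatrix κ c)ᴴ * S * filterMatrix κ c =
      of fun p p' => star (c p.1) * c p'.1 * S p.2 p'.2 := by
  ext ⟨l, i⟩ ⟨m, j⟩
  simp [filterMatrix, mul_apply, apply_ite (star : R → R), ite_mul]
  ring

theorem integrable_conjTranspose_mul_mul_filterMatrix_apply {α : Type*} [MeasurableSpace α]
    {μ : Measure α} {S : α → Matrix κ κ ℂ} (hS : ∀ i j, Integrable (fun ω => S ω i j) μ)
    {c : ι → α → ℂ} (hc : ∀ k, AEStronglyMeasurable (c k) μ) (hc_le : ∀ k ω, ‖c k ω‖ ≤ 1)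
    (p p' : ι × κ) :
    Integrable (fun ω => ((filterMatrix κ (c · ω))ᴴ * S ω * filterMatrix κ (c · ω)) p p') μ := by
  simp only [conjTranspose_mul_mul_filterMatrix, of_apply]
  refine (hS _ _).bdd_mul (c := 1) ((hc _).star.mul (hc _)) (ae_of_all _ fun ω => ?_)
  simpa using mul_le_one₀ (hc_le p.1 ω) (norm_nonneg _) (hc_le p'.1 ω)

end filterMatrix

end Matrix

theorem Complex.exp_I_mul_intCast_sub_mul (l m : ℕ) (ω : ℝ) :
    Complex.exp (Complex.I * (((m : ℤ) - (l : ℤ) : ℤ) : ℂ) * ω) =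
      star (Complex.exp (Complex.I * ((l : ℂ) + 1) * ω)) *
        Complex.exp (Complex.I * ((m : ℂ) + 1) * ω) := by
  rw [Complex.star_def, ← Complex.exp_conj, ← Complex.exp_add]
  congr 1
  simp only [map_mul, map_add, map_one, Complex.conj_I, Complex.conj_natCast,
    Complex.conj_ofReal]
  push_cast
  ring

theorem block_toeplitz_posDef_iff_filter_not_ae_null_general
    (n N : ℕ)
    (S : ℝ → Matrix (Fin n) (Fin n) ℂ)
    (hS : ∀ i j, IntegrableOn (fun ω => S ω i j) (Set.Icc (-π) π))
    (hSpsd : ∀ᵐ ω ∂(volume.restrict (Set.Icc (-π) π)), (S ω).PosSemidef)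
    (R : ℤ → Matrix (Fin n) (Fin n) ℂ)
    (hR : ∀ (k : ℤ) (i j : Fin n),
      R k i j = ∫ ω in Set.Icc (-π) π, Complex.exp (Complex.I * k * ω) * S ω i j)
    (Rbar : Matrix (Fin N × Fin n) (Fin N × Fin n) ℂ)
    (hRbar : ∀ (l m : Fin N) (i j : Fin n),
      Rbar (l, i) (m, j) = R ((m : ℤ) - (l : ℤ)) i j) :
    Rbar.PosDef ↔
      ∀ q : Fin N → (Fin n → ℂ), q ≠ 0 →
        0 < volume {ω | ω ∈ Set.Icc (-π) π ∧
          S ω *ᵥ (∑ k : Fin N, Complex.exp (Complex.I * ((k : ℕ) + 1) * ω) • q k) ≠ 0} := by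
  set μ := volume.restrict (Set.Icc (-π) π)
  set B : ℝ → Matrix (Fin n) (Fin N × Fin n) ℂ := fun ω =>
    filterMatrix (Fin n) fun k : Fin N => Complex.exp (Complex.I * ((k : ℕ) + 1) * ω)
  have hA : ∀ p p', Integrable (fun ω => ((B ω)ᴴ * S ω * B ω) p p') μ :=
    integrable_conjTranspose_mul_mul_filterMatrix_apply _ hS
      (fun _ => Continuous.aestronglyMeasurable (by fun_prop)) fun _ _ => by
        simp [Complex.norm_exp]
  have hRbar_eq : Rbar = of fun p p' => ∫ ω, ((B ω)ᴴ * S ω * B ω) p p' ∂μ := by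
    ext ⟨l, i⟩ ⟨m, j⟩
    simp only [hRbar, hR, B, conjTranspose_mul_mul_filterMatrix, of_apply,
      Complex.exp_I_mul_intCast_sub_mul]
  have hquad : ∀ x, star x ⬝ᵥ Rbar *ᵥ x = ∫ ω, star (B ω *ᵥ x) ⬝ᵥ S ω *ᵥ (B ω *ᵥ x) ∂μ := by
    intro x
    simp only [hRbar_eq, dotProduct_mulVec_integral hA,
      star_dotProduct_conjTranspose_mul_mul_mulVec]
  have hint : ∀ x, Integrable (fun ω => star (B ω *ᵥ x) ⬝ᵥ S ω *ᵥ (B ω *ᵥ x)) μ := fun x =>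
    (integrable_dotProduct_mulVec hA (star x) x).congr
      (ae_of_all _ fun ω => star_dotProduct_conjTranspose_mul_mul_mulVec _ _ _)
  have hpsd : Rbar.PosSemidef := posSemidef_of_forall_dotProduct_mulVec_nonneg fun x =>
    hquad x ▸ integral_nonneg_of_ae (hSpsd.mono fun ω h => h.dotProduct_mulVec_nonneg _)
  rw [posDef_iff_dotProduct_mulVec, and_iff_right hpsd.isHermitian,
    (Equiv.curry _ _ _).forall_congr_left]
  refine forall_congr' fun q => ?_
  rw [Equiv.curry_symm_apply, hquad, integral_star_dotProduct_mulVec_pos_iff hSpsd (hint _),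
    Measure.restrict_apply' measurableSet_Icc, Set.inter_comm]
  simp only [B, filterMatrix_mulVec_uncurry]
  exact imp_congr_left ((Equiv.curry _ _ _).symm.injective.ne_iff' rfl)

/-- With `S : [-π, π] → Matrix n n ℂ` integrable and a.e. Hermitian
positive semidefinite, `R(k) = ∫_{-π}^{π} e^{ikω} S(ω) dω`, and `R̄(N)` the `Nn × Nn`
block Toeplitz matrix with `(l, m)` block `R(m − l)`: `R̄(N)` is positive definite iff
for every nonzero `q = (q_1, …, q_N) ∈ (ℂ^n)^N` the set
`{ ω ∈ [-π, π] : S(ω) Q(ω) ≠ 0 }` has positive Lebesgue measure, where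
`Q(ω) = Σ_{k=1}^N e^{ikω} q_k`. -/
theorem block_toeplitz_posDef_iff_filter_not_ae_null
    (n N : ℕ) (hn : 0 < n) (hN : 0 < N)
    (S : ℝ → Matrix (Fin n) (Fin n) ℂ)
    (hS : ∀ i j, IntegrableOn (fun ω => S ω i j) (Set.Icc (-π) π))
    (hSpsd : ∀ᵐ ω ∂(volume.restrict (Set.Icc (-π) π)), (S ω).PosSemidef)
    (R : ℤ → Matrix (Fin n) (Fin n) ℂ)
    (hR : ∀ (k : ℤ) (i j : Fin n),
      R k i j = ∫ ω in Set.Icc (-π) π, Complex.exp (Complex.I * k * ω) * S ω i j)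
    (Rbar : Matrix (Fin N × Fin n) (Fin N × Fin n) ℂ)
    (hRbar : ∀ (l m : Fin N) (i j : Fin n),
      Rbar (l, i) (m, j) = R ((m : ℤ) - (l : ℤ)) i j) :
    Rbar.PosDef ↔
      ∀ q : Fin N → (Fin n → ℂ), q ≠ 0 →
        0 < volume {ω | ω ∈ Set.Icc (-π) π ∧
          S ω *ᵥ (∑ k : Fin N, Complex.exp (Complex.I * ((k : ℕ) + 1) * ω) • q k) ≠ 0} :=
  block_toeplitz_posDef_iff_filter_not_ae_null_general n N S hS hSpsd R hR Rbar hRbar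
end

section
/- Let μ be a finite positive Borel measure on the half-open interval [-π, π) and let N be a positive integer. Define R : ℤ → ℂ by R(k) = ∫_{[-π,π)} e^{ikω} dμ(ω), and let T_N be the N × N Toeplitz matrix with entries (T_N)_{l,m} = R(m − l) for 1 ≤ l, m ≤ N. Then T_N is positive definite if and only if the support of μ contains at least N points. In particular, if the support of μ contains at least N distinct frequencies then T_N is positive definite, and if the support contains fewer than N points then T_N is singular. -/
/-!
The Toeplitz matrix is `T l m = charFun μ (m - l)`, and `q* T q = ∫ |∑ₘ qₘ e^{imω}|² dμ`.
Hence `T` is positive semidefinite, so it is positive definite iff nonsingular, and `T q = 0`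
exactly when the trigonometric polynomial `∑ₘ qₘ e^{imω}` vanishes `μ`-a.e. That polynomial is
`P(e^{iω})` with `deg P < N`, and `ω ↦ e^{iω}` is injective on `[-π, π)`, so for `q ≠ 0` it has
fewer than `N` zeros there; a finite set is closed, so if `μ` is carried by it, it contains the
support. Conversely, if the support has fewer than `N` points, `P = ∏ (X - e^{iω})` over
them has degree `< N` and vanishes on the support, which is conull.
-/

open MeasureTheory Matrix Real Complex ComplexConjugate Polynomial
open scoped ComplexOrder

noncomputable def expSum {ι : Type*} [Fintype ι] (t : ι → ℝ) (q : ι → ℂ) (x : ℝ) : ℂ :=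
  ∑ i, q i * cexp (t i * x * I)

noncomputable def charFunMatrix {ι : Type*} (μ : Measure ℝ) (t : ι → ℝ) : Matrix ι ι ℂ :=
  Matrix.of fun l m => charFun μ (t m - t l)

lemma isHermitian_charFunMatrix {ι : Type*} (μ : Measure ℝ) (t : ι → ℝ) :
    (charFunMatrix μ t).IsHermitian :=
  IsHermitian.ext fun l m => by
    simp only [charFunMatrix, of_apply, RCLike.star_def, ← charFun_neg, neg_sub]

lemma conj_cexp_mul_cexp (a b x : ℝ) :
    conj (cexp (a * x * I)) * cexp (b * x * I) = cexp ((b - a : ℝ) * x * I) := by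
  rw [← Complex.exp_conj, ← Complex.exp_add]
  congr 1
  simp only [map_mul, conj_ofReal, conj_I]
  push_cast
  ring

section QuadraticForm

variable {ι : Type*} [Fintype ι]

lemma continuous_expSum (t : ι → ℝ) (q : ι → ℂ) : Continuous (expSum t q) := by
  unfold expSum; fun_prop

lemma norm_expSum_le (t : ι → ℝ) (q : ι → ℂ) (x : ℝ) : ‖expSum t q x‖ ≤ ∑ i, ‖q i‖ :=
  (norm_sum_le _ _).trans <| Finset.sum_le_sum fun i _ => by
    rw [norm_mul, ← ofReal_mul, norm_exp_ofReal_mul_I, mul_one]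

variable {μ : Measure ℝ} [IsFiniteMeasure μ]

lemma integrable_cexp_mul_I (a : ℝ) : Integrable (fun x : ℝ => cexp (a * x * I)) μ :=
  Integrable.of_bound (by fun_prop) 1 <| ae_of_all _ fun x => by
    rw [← ofReal_mul, norm_exp_ofReal_mul_I]

lemma integrable_norm_expSum_sq (t : ι → ℝ) (q : ι → ℂ) :
    Integrable (fun x => ‖expSum t q x‖ ^ 2) μ :=
  Integrable.of_bound ((continuous_expSum t q).norm.pow 2).aestronglyMeasurable
    ((∑ i, ‖q i‖) ^ 2) <| ae_of_all _ fun x => by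
      rw [norm_pow, norm_norm]
      exact pow_le_pow_left₀ (norm_nonneg _) (norm_expSum_le t q x) 2

lemma star_dotProduct_charFunMatrix_mulVec (t : ι → ℝ) (q : ι → ℂ) :
    star q ⬝ᵥ (charFunMatrix μ t *ᵥ q) = ((∫ x, ‖expSum t q x‖ ^ 2 ∂μ : ℝ) : ℂ) := by
  have hint (l m : ι) : Integrable
      (fun x : ℝ => conj (q l * cexp (t l * x * I)) * (q m * cexp (t m * x * I))) μ := by
    simp_rw [map_mul, mul_mul_mul_comm _ _ (q m), conj_cexp_mul_cexp]
    exact (integrable_cexp_mul_I _).const_mul _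
  calc star q ⬝ᵥ (charFunMatrix μ t *ᵥ q)
      = ∑ l, ∑ m, ∫ x, conj (q l * cexp (t l * x * I)) * (q m * cexp (t m * x * I)) ∂μ := by
        simp only [dotProduct, mulVec, charFunMatrix, of_apply, Finset.mul_sum, charFun_apply_real]
        refine Finset.sum_congr rfl fun l _ => Finset.sum_congr rfl fun m _ => ?_
        simp_rw [map_mul, mul_mul_mul_comm _ _ (q m), conj_cexp_mul_cexp, integral_const_mul]
        simp only [Pi.star_apply, RCLike.star_def]
        ring
    _ = ∫ x, conj (expSum t q x) * expSum t q x ∂μ := by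
        simp_rw [expSum, map_sum, Finset.sum_mul_sum]
        rw [integral_finsetSum _ fun l _ => integrable_finsetSum _ fun m _ => hint l m]
        exact Finset.sum_congr rfl fun l _ => (integral_finsetSum _ fun m _ => hint l m).symm
    _ = _ := by
        simp_rw [conj_mul', ← ofReal_pow]
        exact integral_ofReal

lemma posSemidef_charFunMatrix (t : ι → ℝ) : (charFunMatrix μ t).PosSemidef :=
  .of_dotProduct_mulVec_nonneg (isHermitian_charFunMatrix μ t) fun q => by
    rw [star_dotProduct_charFunMatrix_mulVec, zero_le_real]
    exact integral_nonneg fun x => by positivity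

lemma charFunMatrix_mulVec_eq_zero_iff (t : ι → ℝ) (q : ι → ℂ) :
    charFunMatrix μ t *ᵥ q = 0 ↔ expSum t q =ᵐ[μ] 0 := by
  rw [← (posSemidef_charFunMatrix t).dotProduct_mulVec_zero_iff,
    star_dotProduct_charFunMatrix_mulVec, ofReal_eq_zero,
    integral_eq_zero_iff_of_nonneg (fun x => by positivity) (integrable_norm_expSum_sq t q)]
  refine Filter.eventually_congr (ae_of_all _ fun x => ?_)
  simp

end QuadraticForm

section Zeros

variable {N : ℕ}

lemma expSum_natCast_eq_eval (q : Fin N → ℂ) (x : ℝ) :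
    expSum (fun m : Fin N => (m : ℝ)) q x
      = ((degreeLTEquiv ℂ N).symm q : ℂ[X]).eval (cexp (x * I)) := by
  simp only [expSum, degreeLTEquiv, LinearEquiv.coe_symm_mk', eval_finsetSum, eval_monomial,
    ← Complex.exp_nat_mul]
  refine Finset.sum_congr rfl fun m _ => ?_
  push_cast
  ring_nf

lemma encard_Ico_inter_expSum_zeros_lt {q : Fin N → ℂ} (hq : q ≠ 0) :
    (Set.Ico (-π) π ∩ {x | expSum (fun m : Fin N => (m : ℝ)) q x = 0}).encard < N := by
  set Q : ℂ[X] := ↑((degreeLTEquiv ℂ N).symm q)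
  have hQ : Q ≠ 0 := by simpa [Q] using hq
  have hdeg : Q.natDegree < N :=
    (natDegree_lt_iff_degree_lt hQ).mpr (mem_degreeLT.mp ((degreeLTEquiv ℂ N).symm q).2)
  have hinj : Set.InjOn (fun x : ℝ => cexp (x * I)) (Set.Ico (-π) π) :=
    fun a ha b hb hab => Circle.exp_injOn_Ico (by linarith) ha hb (Subtype.ext (by simpa using hab))
  calc _ = ((fun x : ℝ => cexp (x * I)) ''
        (Set.Ico (-π) π ∩ {x | expSum (fun m : Fin N => (m : ℝ)) q x = 0})).encard :=
        (hinj.mono Set.inter_subset_left).encard_image.symm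
    _ ≤ (Q.roots.toFinset : Set ℂ).encard := by
        refine Set.encard_mono ?_
        rintro _ ⟨x, ⟨-, hx⟩, rfl⟩
        simpa [expSum_natCast_eq_eval, hQ, Q] using hx
    _ < N := by
        rw [Set.encard_coe_eq_coe_finsetCard]
        exact_mod_cast ((Multiset.toFinset_card_le _).trans (card_roots' Q)).trans_lt hdeg

lemma exists_expSum_eq_zero_of_encard_lt {s : Set ℝ} (hs : s.encard < N) :
    ∃ q : Fin N → ℂ, q ≠ 0 ∧ ∀ x ∈ s, expSum (fun m : Fin N => (m : ℝ)) q x = 0 := by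
  have hfin : s.Finite := Set.encard_lt_top_iff.mp (hs.trans_le le_top)
  set Q : ℂ[X] := ∏ x ∈ hfin.toFinset, (X - C (cexp (x * I)))
  have hmonic : Q.Monic := monic_prod_of_monic _ _ fun x _ => monic_X_sub_C _
  have hQ : Q ∈ degreeLT ℂ N := by
    rw [mem_degreeLT, degree_eq_natDegree hmonic.ne_zero,
      natDegree_prod_of_monic _ _ fun x _ => monic_X_sub_C _]
    rw [hfin.encard_eq_coe_toFinset_card] at hs
    simpa using hs
  refine ⟨degreeLTEquiv ℂ N ⟨Q, hQ⟩, by simpa using hmonic.ne_zero, fun x hx => ?_⟩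
  rw [expSum_natCast_eq_eval, LinearEquiv.symm_apply_apply, eval_prod]
  exact Finset.prod_eq_zero (hfin.mem_toFinset.mpr hx) (by simp)

lemma encard_support_lt_iff_exists_expSum_ae_eq_zero {μ : Measure ℝ}
    (hμ : μ (Set.Ico (-π) π)ᶜ = 0) :
    μ.support.encard < N ↔
      ∃ q : Fin N → ℂ, q ≠ 0 ∧ expSum (fun m : Fin N => (m : ℝ)) q =ᵐ[μ] 0 := by
  constructor
  · intro hs
    obtain ⟨q, hq, hzero⟩ := exists_expSum_eq_zero_of_encard_lt hs
    exact ⟨q, hq, Filter.mem_of_superset Measure.support_mem_ae hzero⟩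
  · rintro ⟨q, hq, hzero⟩
    have hF := encard_Ico_inter_expSum_zeros_lt hq
    have hclosed := (Set.encard_lt_top_iff.mp (hF.trans_le le_top)).isClosed
    have hae : Set.Ico (-π) π ∩ {x | expSum (fun m : Fin N => (m : ℝ)) q x = 0} ∈ ae μ :=
      Filter.inter_mem (mem_ae_iff.mpr hμ) hzero
    exact (Set.encard_mono (Measure.support_subset_of_isClosed hclosed hae)).trans_lt hF

lemma det_charFunMatrix_eq_zero_iff {μ : Measure ℝ} [IsFiniteMeasure μ]
    (hμ : μ (Set.Ico (-π) π)ᶜ = 0) :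
    (charFunMatrix μ fun m : Fin N => (m : ℝ)).det = 0 ↔ μ.support.encard < N := by
  simp_rw [← exists_mulVec_eq_zero_iff, encard_support_lt_iff_exists_expSum_ae_eq_zero hμ,
    charFunMatrix_mulVec_eq_zero_iff]

end Zeros

theorem toeplitz_posDef_iff_support_card_general
    (N : ℕ)
    (μ : Measure ℝ) [IsFiniteMeasure μ]
    (hμsupp : μ (Set.Ico (-π) π)ᶜ = 0)
    (R : ℤ → ℂ)
    (hR : ∀ k : ℤ, R k = ∫ ω, Complex.exp (Complex.I * k * ω) ∂μ)
    (T : Matrix (Fin N) (Fin N) ℂ)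
    (hT : ∀ l m : Fin N, T l m = R ((m : ℤ) - (l : ℤ))) :
    (T.PosDef ↔
      (N : ℕ∞) ≤ {x : ℝ | ∀ U : Set ℝ, IsOpen U → x ∈ U → 0 < μ U}.encard) ∧
    ({x : ℝ | ∀ U : Set ℝ, IsOpen U → x ∈ U → 0 < μ U}.encard < (N : ℕ∞) →
      T.det = 0) := by
  have hsupp : {x : ℝ | ∀ U : Set ℝ, IsOpen U → x ∈ U → 0 < μ U} = μ.support := by
    rw [Measure.support_eq_forall_isOpen]
    exact Set.ext fun x => forall_congr' fun U => imp.swap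
  have hTchar : T = charFunMatrix μ fun m : Fin N => (m : ℝ) := by
    ext l m
    rw [hT, hR, charFunMatrix, of_apply, charFun_apply_real]
    congr 1 with ω
    push_cast
    ring_nf
  rw [hsupp, hTchar, (posSemidef_charFunMatrix _).posDef_iff_det_ne_zero, Ne,
    det_charFunMatrix_eq_zero_iff hμsupp, not_lt]
  exact ⟨Iff.rfl, id⟩

/-- For a finite positive Borel measure `μ` on `[-π, π)`, with
`R(k) = ∫ e^{ikω} dμ(ω)` and `T_N` the `N × N` Toeplitz matrix with entries
`(T_N)_{l,m} = R(m − l)`: `T_N` is positive definite iff the support of `μ`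
(the set of points every open neighborhood of which has positive `μ`-measure)
contains at least `N` points; and if the support has fewer than `N` points then
`T_N` is singular. -/
theorem toeplitz_posDef_iff_support_card
    (N : ℕ) (hN : 0 < N)
    (μ : Measure ℝ) [IsFiniteMeasure μ]
    (hμsupp : μ (Set.Ico (-π) π)ᶜ = 0)
    (R : ℤ → ℂ)
    (hR : ∀ k : ℤ, R k = ∫ ω, Complex.exp (Complex.I * k * ω) ∂μ)
    (T : Matrix (Fin N) (Fin N) ℂ)
    (hT : ∀ l m : Fin N, T l m = R ((m : ℤ) - (l : ℤ))) :
    (T.PosDef ↔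
      (N : ℕ∞) ≤ {x : ℝ | ∀ U : Set ℝ, IsOpen U → x ∈ U → 0 < μ U}.encard) ∧
    ({x : ℝ | ∀ U : Set ℝ, IsOpen U → x ∈ U → 0 < μ U}.encard < (N : ℕ∞) →
      T.det = 0) :=
  toeplitz_posDef_iff_support_card_general N μ hμsupp R hR T hT
end

section
/- Let n and N be positive integers and let S : [-π, π] → Matrix n n ℂ be a continuous matrix-valued function such that S(ω) is Hermitian positive semidefinite for every ω ∈ [-π, π]. Suppose there exist N distinct frequencies ω_1, …, ω_N ∈ (-π, π) such that S(ω_j) is positive definite for each j. Define R(k) = ∫_{-π}^{π} e^{ikω} S(ω) dω and let R̄(N) be the Nn × Nn block Toeplitz matrix whose (l,m) block is R(m − l), 1 ≤ l, m ≤ N. Then R̄(N) is positive definite. -/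
/-!
For `x ≠ 0` let `p(ω) = ∑ₘ e^{imω} xₘ ∈ ℂⁿ`. Expanding the blocks of `R̄(N)` gives
`x* R̄(N) x = ∫ p(ω)* S(ω) p(ω) dω`, and the integrand is continuous and nonnegative.
Every coordinate of `p` is a polynomial of degree `< N` in `e^{iω}`, so by Vandermonde `p`
cannot vanish at all `N` distinct points `ω_j`; at an `ω_j` where it does not, `S(ω_j) ≻ 0` makes
the integrand positive, hence the integral is positive.
-/

open MeasureTheory Matrix Real
open scoped ComplexOrder

open Set Filter Topology Function

theorem ContinuousOn.setIntegral_pos_of_mem_nhds {X : Type*} [TopologicalSpace X]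
    [MeasurableSpace X] [OpensMeasurableSpace X] {μ : Measure X} [μ.IsOpenPosMeasure]
    {f : X → ℝ} {s : Set X} {c : X} (hf : ContinuousOn f s) (hs : MeasurableSet s)
    (hfi : IntegrableOn f s μ) (hf0 : ∀ x ∈ s, 0 ≤ f x) (hsc : s ∈ 𝓝 c) (hfc : 0 < f c) :
    0 < ∫ x in s, f x ∂μ := by
  have hf0' : 0 ≤ᵐ[μ.restrict s] f := ae_restrict_of_forall_mem hs hf0
  rw [setIntegral_pos_iff_support_of_nonneg_ae hf0' hfi]
  have hpos : f ⁻¹' Ioi 0 ∩ s ∈ 𝓝 c :=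
    inter_mem ((hf.continuousAt hsc).preimage_mem_nhds (Ioi_mem_nhds hfc)) hsc
  exact (Measure.measure_pos_of_mem_nhds μ hpos).trans_le
    (measure_mono fun x hx => ⟨ne_of_gt hx.1, hx.2⟩)

theorem ContinuousOn.setIntegral_pos_of_mem_nhds' {X 𝕜 : Type*} [TopologicalSpace X]
    [MeasurableSpace X] [OpensMeasurableSpace X] {μ : Measure X} [μ.IsOpenPosMeasure]
    [RCLike 𝕜] {f : X → 𝕜} {s : Set X} {c : X} (hf : ContinuousOn f s) (hs : MeasurableSet s)
    (hfi : IntegrableOn f s μ) (hf0 : ∀ x ∈ s, 0 ≤ f x) (hsc : s ∈ 𝓝 c) (hfc : 0 < f c) :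
    0 < ∫ x in s, f x ∂μ := by
  simp only [RCLike.nonneg_iff (z := f _)] at hf0
  rw [RCLike.pos_iff] at hfc ⊢
  refine ⟨?_, ?_⟩
  · rw [← integral_re hfi]
    exact (RCLike.continuous_re.comp_continuousOn hf).setIntegral_pos_of_mem_nhds hs hfi.re
      (fun x hx => (hf0 x hx).1) hsc hfc.1
  · rw [← integral_im hfi, setIntegral_congr_fun hs fun x hx => (hf0 x hx).2, integral_zero]

section MatrixIntegral

variable {ι α 𝕜 : Type*} [RCLike 𝕜] [MeasurableSpace α] {μ : Measure α}
  {F : α → Matrix ι ι 𝕜} {M : Matrix ι ι 𝕜}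

theorem Matrix.isHermitian_of_apply_eq_integral (hF : ∀ᵐ a ∂μ, (F a).IsHermitian)
    (hM : ∀ i j, M i j = ∫ a, F a i j ∂μ) : M.IsHermitian := by
  ext i j
  rw [conjTranspose_apply, hM, hM, RCLike.star_def, ← integral_conj]
  refine integral_congr_ae (hF.mono fun a ha => ?_)
  simpa using congr_fun₂ ha i j

theorem Matrix.dotProduct_mulVec_eq_integral [Fintype ι]
    (hF : ∀ i j, Integrable (fun a => F a i j) μ) (hM : ∀ i j, M i j = ∫ a, F a i j ∂μ)
    (x : ι → 𝕜) : star x ⬝ᵥ M *ᵥ x = ∫ a, star x ⬝ᵥ F a *ᵥ x ∂μ := by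
  have hterm : ∀ i j, Integrable (fun a => star x i * F a i j * x j) μ := fun i j =>
    ((hF i j).const_mul _).mul_const _
  calc star x ⬝ᵥ M *ᵥ x = ∑ i, ∑ j, ∫ a, star x i * F a i j * x j ∂μ := by
        simp only [dotProduct, mulVec, hM, Finset.mul_sum, integral_mul_const,
          integral_const_mul, mul_assoc]
    _ = ∫ a, ∑ i, ∑ j, star x i * F a i j * x j ∂μ := by
        rw [integral_finsetSum _ fun i _ => integrable_finsetSum _ fun j _ => hterm i j]
        exact Finset.sum_congr rfl fun i _ =>
          (integral_finsetSum _ fun j _ => hterm i j).symm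
    _ = ∫ a, star x ⬝ᵥ F a *ᵥ x ∂μ := by
        simp only [dotProduct, mulVec, Finset.mul_sum, mul_assoc]

end MatrixIntegral

theorem Matrix.exists_sum_pow_mul_ne_zero {R : Type*} [CommRing R] [IsDomain R] {N : ℕ}
    {z : Fin N → R} (hz : Injective z) {c : Fin N → R} (hc : c ≠ 0) :
    ∃ j, ∑ m : Fin N, z j ^ (m : ℕ) * c m ≠ 0 := by
  by_contra! h
  exact hc (eq_zero_of_mulVec_eq_zero (det_vandermonde_ne_zero_iff.2 hz) (funext h))

theorem Complex.injOn_exp_mul_I_Ioo :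
    InjOn (fun θ : ℝ => Complex.exp (θ * Complex.I)) (Ioo (-π) π) :=
  fun _ ha _ hb h => (Circle.exp_injOn_Ioc (by linarith)).mono Ioo_subset_Ioc_self ha hb
    (Subtype.ext (by simpa only [Circle.coe_exp] using h))

section FourierBlock

variable (ι : Type*) [DecidableEq ι] (N : ℕ)

/-- The block row `E(ω) = [I, e^{iω} I, …, e^{i(N-1)ω} I]`, so that `E(ω) x = p(ω)` and
`R̄(N) = ∫ E(ω)ᴴ S(ω) E(ω) dω` entrywise. -/
noncomputable def fourierBlock (ω : ℝ) : Matrix ι (Fin N × ι) ℂ :=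
  Matrix.of fun i p => if p.2 = i then Complex.exp (Complex.I * (p.1 : ℕ) * ω) else 0

theorem continuous_fourierBlock : Continuous (fourierBlock ι N) :=
  continuous_pi fun _ => continuous_pi fun _ => by
    simp only [fourierBlock, of_apply]
    split_ifs <;> fun_prop

variable {ι N} [Fintype ι]

theorem fourierBlock_conjTranspose_mul_mul_apply (A : Matrix ι ι ℂ) (ω : ℝ) (l m : Fin N)
    (i j : ι) : ((fourierBlock ι N ω)ᴴ * A * fourierBlock ι N ω) (l, i) (m, j) =
      Complex.exp (Complex.I * (((m : ℤ) - l : ℤ) : ℂ) * ω) * A i j := by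
  simp only [fourierBlock, mul_apply, conjTranspose_apply, of_apply, RCLike.star_def,
    apply_ite (starRingEnd ℂ), ← Complex.exp_conj, map_mul, Complex.conj_I, map_natCast,
    neg_mul, Complex.conj_ofReal, map_zero, ite_mul, zero_mul, Finset.sum_ite_eq,
    Finset.mem_univ, ↓reduceIte, mul_ite, mul_zero, Int.cast_sub, Int.cast_natCast]
  rw [mul_right_comm, ← Complex.exp_add]
  congr 2
  ring

theorem fourierBlock_mulVec_apply (ω : ℝ) (x : Fin N × ι → ℂ) (i : ι) :
    (fourierBlock ι N ω *ᵥ x) i =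
      ∑ m : Fin N, Complex.exp (ω * Complex.I) ^ (m : ℕ) * x (m, i) := by
  simp only [fourierBlock, mulVec, dotProduct, Fintype.sum_prod_type, of_apply, ite_mul,
    zero_mul, Finset.sum_ite_eq', Finset.mem_univ, if_true, ← Complex.exp_nat_mul]
  refine Finset.sum_congr rfl fun m _ => ?_
  ring_nf

theorem exists_fourierBlock_mulVec_ne_zero {w : Fin N → ℝ} (hw : Injective w)
    (hw_mem : ∀ j, w j ∈ Ioo (-π) π) {x : Fin N × ι → ℂ} (hx : x ≠ 0) :
    ∃ j, fourierBlock ι N (w j) *ᵥ x ≠ 0 := by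
  obtain ⟨⟨m, i⟩, hmi⟩ := Function.ne_iff.1 hx
  have hz : Injective fun j => Complex.exp (w j * Complex.I) := fun a b h =>
    hw (Complex.injOn_exp_mul_I_Ioo (hw_mem a) (hw_mem b) h)
  obtain ⟨j, hj⟩ :=
    Matrix.exists_sum_pow_mul_ne_zero hz (c := fun m => x (m, i)) (Function.ne_iff.2 ⟨m, hmi⟩)
  exact ⟨j, fun h => hj (by rw [← fourierBlock_mulVec_apply, h, Pi.zero_apply])⟩

end FourierBlock

theorem block_toeplitz_posDef_of_N_spectral_lines_general
    (n N : ℕ)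
    (S : ℝ → Matrix (Fin n) (Fin n) ℂ)
    (hScont : ContinuousOn S (Set.Icc (-π) π))
    (hSpsd : ∀ ω ∈ Set.Icc (-π) π, (S ω).PosSemidef)
    (w : Fin N → ℝ)
    (hw_inj : Function.Injective w)
    (hw_mem : ∀ j : Fin N, w j ∈ Set.Ioo (-π) π)
    (hw_pd : ∀ j : Fin N, (S (w j)).PosDef)
    (R : ℤ → Matrix (Fin n) (Fin n) ℂ)
    (hR : ∀ (k : ℤ) (i j : Fin n),
      R k i j = ∫ ω in Set.Icc (-π) π, Complex.exp (Complex.I * k * ω) * S ω i j)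
    (Rbar : Matrix (Fin N × Fin n) (Fin N × Fin n) ℂ)
    (hRbar : ∀ (l m : Fin N) (i j : Fin n),
      Rbar (l, i) (m, j) = R ((m : ℤ) - (l : ℤ)) i j) :
    Rbar.PosDef := by
  set E := fourierBlock (Fin n) N
  set F := fun ω => (E ω)ᴴ * S ω * E ω
  have hFcont : ContinuousOn F (Icc (-π) π) := by
    have := continuous_fourierBlock (Fin n) N
    fun_prop
  have hFpsd : ∀ ω ∈ Icc (-π) π, (F ω).PosSemidef := fun ω hω =>
    (hSpsd ω hω).conjTranspose_mul_mul_same (E ω)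
  have hRbarF : ∀ p q, Rbar p q = ∫ ω in Icc (-π) π, F ω p q := by
    rintro ⟨l, i⟩ ⟨m, j⟩
    simp only [F, E, hRbar, hR, fourierBlock_conjTranspose_mul_mul_apply]
  have hFint : ∀ p q, IntegrableOn (fun ω => F ω p q) (Icc (-π) π) := fun p q =>
    ((continuous_apply_apply p q).comp_continuousOn hFcont).integrableOn_Icc
  have hRbar_herm : Rbar.IsHermitian := isHermitian_of_apply_eq_integral
    (ae_restrict_of_forall_mem measurableSet_Icc fun ω hω => (hFpsd ω hω).isHermitian) hRbarF
  refine .of_dotProduct_mulVec_pos hRbar_herm fun x hx => ?_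
  obtain ⟨j, hj⟩ := exists_fourierBlock_mulVec_ne_zero hw_inj hw_mem hx
  have hQcont : ContinuousOn (fun ω => star x ⬝ᵥ F ω *ᵥ x) (Icc (-π) π) := by fun_prop
  rw [dotProduct_mulVec_eq_integral hFint hRbarF]
  refine hQcont.setIntegral_pos_of_mem_nhds' measurableSet_Icc hQcont.integrableOn_Icc
    (fun ω hω => (hFpsd ω hω).dotProduct_mulVec_nonneg x)
    (Icc_mem_nhds (hw_mem j).1 (hw_mem j).2) ?_
  simpa only [F, star_mulVec, dotProduct_mulVec, vecMul_vecMul] using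
    (hw_pd j).dotProduct_mulVec_pos hj

/-- If `S : [-π, π] → Matrix n n ℂ` is continuous, Hermitian positive
semidefinite everywhere on `[-π, π]`, and positive definite at `N` distinct frequencies
`ω_1, …, ω_N ∈ (-π, π)`, then the `Nn × Nn` block Toeplitz matrix `R̄(N)` built from
`R(k) = ∫_{-π}^{π} e^{ikω} S(ω) dω` with `(l, m)` block `R(m − l)` is positive
definite. -/
theorem block_toeplitz_posDef_of_N_spectral_lines
    (n N : ℕ) (hn : 0 < n) (hN : 0 < N)
    (S : ℝ → Matrix (Fin n) (Fin n) ℂ)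
    (hScont : ContinuousOn S (Set.Icc (-π) π))
    (hSpsd : ∀ ω ∈ Set.Icc (-π) π, (S ω).PosSemidef)
    (w : Fin N → ℝ)
    (hw_inj : Function.Injective w)
    (hw_mem : ∀ j : Fin N, w j ∈ Set.Ioo (-π) π)
    (hw_pd : ∀ j : Fin N, (S (w j)).PosDef)
    (R : ℤ → Matrix (Fin n) (Fin n) ℂ)
    (hR : ∀ (k : ℤ) (i j : Fin n),
      R k i j = ∫ ω in Set.Icc (-π) π, Complex.exp (Complex.I * k * ω) * S ω i j)
    (Rbar : Matrix (Fin N × Fin n) (Fin N × Fin n) ℂ)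
    (hRbar : ∀ (l m : Fin N) (i j : Fin n),
      Rbar (l, i) (m, j) = R ((m : ℤ) - (l : ℤ)) i j) :
    Rbar.PosDef :=
  block_toeplitz_posDef_of_N_spectral_lines_general n N S hScont hSpsd w hw_inj hw_mem hw_pd R hR
    Rbar hRbar
end
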